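/- Every maximal proper reflection subgroup of the Weyl group of type B_n (n ≥ 2) is, up to conjugation, either the Weyl group of type D_n or a direct product of Weyl groups of types B_k and B_{n-k} for some 1 ≤ k ≤ ⌊n/2⌋. -/

import Mathlib

open scoped RealInnerProductSpace

noncomputable section

/-- The roots `±e_i ± e_j`, `i ≠ j` (type `D_n`, the long roots of `B_n`). -/
def DRootsM (m : ℕ) : Set (EuclideanSpace ℝ (Fin m)) :=
  {v | ∃ i j, ∃ a b : ℝ, i ≠ j ∧ (a = 1 ∨ a = -1) ∧ (b = 1 ∨ b = -1) ∧
    v = a • EuclideanSpace.single i (1 : ℝ) + b • EuclideanSpace.single j (1 : ℝ)}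

/-- The roots of `B_l`: `±e_i ± e_j` (`i ≠ j`) together with `±e_i`. -/
def BRootsM (l : ℕ) : Set (EuclideanSpace ℝ (Fin l)) :=
  DRootsM l ∪ {v | ∃ i, ∃ a : ℝ, (a = 1 ∨ a = -1) ∧
    v = a • EuclideanSpace.single i (1 : ℝ)}

/-- The linear reflection of `ℝⁿ` in the hyperplane orthogonal to `v`. -/
def reflLin {n : ℕ} (v : EuclideanSpace ℝ (Fin n)) :
    EuclideanSpace ℝ (Fin n) ≃ₗᵢ[ℝ] EuclideanSpace ℝ (Fin n) :=
  Submodule.reflection ((ℝ ∙ v)ᗮ)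

/-- The Weyl group of type `B_n`. -/
def WeylB (n : ℕ) :
    Subgroup (EuclideanSpace ℝ (Fin n) ≃ₗᵢ[ℝ] EuclideanSpace ℝ (Fin n)) :=
  Subgroup.closure (reflLin '' BRootsM n)

/-- The Weyl group of type `D_n` inside `W(B_n)`. -/
def WeylD (n : ℕ) :
    Subgroup (EuclideanSpace ℝ (Fin n) ≃ₗᵢ[ℝ] EuclideanSpace ℝ (Fin n)) :=
  Subgroup.closure (reflLin '' DRootsM n)

/-- The subgroup `W(B_k) × W(B_{n-k})` of `W(B_n)` given by a subset `A` of the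
coordinates (with `|A| = k`): it is generated by the reflections in the roots of `B_n`
supported either on `A` or on its complement. -/
def WeylBB (n : ℕ) (A : Finset (Fin n)) :
    Subgroup (EuclideanSpace ℝ (Fin n) ≃ₗᵢ[ℝ] EuclideanSpace ℝ (Fin n)) :=
  Subgroup.closure (reflLin ''
    {v ∈ BRootsM n | (∀ i, i ∉ A → v i = 0) ∨ ∀ i, i ∈ A → v i = 0})

/-- `H` is a reflection subgroup of `G`: it is generated by a set of reflections
belonging to `G`. -/
def IsReflSubgroupOf {n : ℕ}
    (H G : Subgroup (EuclideanSpace ℝ (Fin n) ≃ₗᵢ[ℝ] EuclideanSpace ℝ (Fin n))) :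
    Prop :=
  ∃ R, (∀ g ∈ R, ∃ v ≠ 0, g = reflLin v) ∧ R ⊆ (G : Set _) ∧ H = Subgroup.closure R


namespace Stmt6Aux

variable {n : ℕ}

/-- standard basis vector -/
def sgl {n : ℕ} (i : Fin n) : EuclideanSpace ℝ (Fin n) := EuclideanSpace.single i 1

@[simp] theorem sgl_apply (i k : Fin n) : sgl i k = if k = i then (1:ℝ) else 0 := by
  simp [sgl]

theorem reflLin_apply (v x : EuclideanSpace ℝ (Fin n)) :
    reflLin v x = x - (2 * ⟪v, x⟫ / ⟪v, v⟫) • v := by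
  rw [reflLin, Submodule.reflection_orthogonal_apply, Submodule.reflection_singleton_apply]
  rw [real_inner_self_eq_norm_sq, two_smul]
  simp only [RCLike.ofReal_real_eq_id, id_eq]
  match_scalars <;> ring

theorem reflLin_smul {c : ℝ} (hc : c ≠ 0) (v : EuclideanSpace ℝ (Fin n)) :
    reflLin (c • v) = reflLin v := by
  refine LinearIsometryEquiv.ext fun x => ?_
  rw [reflLin_apply, reflLin_apply, smul_smul]
  have key : 2 * ⟪c • v, x⟫ / ⟪c • v, c • v⟫ * c = 2 * ⟪v, x⟫ / ⟪v, v⟫ := by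
    simp only [real_inner_smul_left, real_inner_smul_right]
    set A := ⟪v, x⟫ with hA
    set B := ⟪v, v⟫ with hB
    rcases eq_or_ne B 0 with h | h
    · simp [h]
    · field_simp
  rw [key]

theorem reflLin_inv (v : EuclideanSpace ℝ (Fin n)) : (reflLin v)⁻¹ = reflLin v :=
  Submodule.reflection_inv

theorem reflLin_neg (v : EuclideanSpace ℝ (Fin n)) : reflLin (-v) = reflLin v := by
  rw [← neg_one_smul ℝ v, reflLin_smul (by norm_num)]

theorem reflLin_conj (g : EuclideanSpace ℝ (Fin n) ≃ₗᵢ[ℝ] EuclideanSpace ℝ (Fin n))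
    (v : EuclideanSpace ℝ (Fin n)) :
    reflLin (g v) = g * reflLin v * g⁻¹ := by
  refine LinearIsometryEquiv.ext fun x => ?_
  simp only [LinearIsometryEquiv.coe_mul, Function.comp_apply, LinearIsometryEquiv.coe_inv]
  rw [reflLin_apply, reflLin_apply]
  have h1 : ⟪g v, g v⟫ = ⟪v, v⟫ := g.inner_map_map v v
  have h2 : ⟪g v, x⟫ = ⟪v, g.symm x⟫ := by
    conv_lhs => rw [← g.apply_symm_apply x, g.inner_map_map]
  rw [h1, h2, map_sub, map_smul, g.apply_symm_apply]

theorem inner_sgl_left (i : Fin n) (x : EuclideanSpace ℝ (Fin n)) :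
    ⟪sgl i, x⟫ = x i := by
  simpa [sgl] using EuclideanSpace.inner_single_left (𝕜 := ℝ) i 1 x

theorem refl_short_apply {a : ℝ} (ha : a = 1 ∨ a = -1) (i : Fin n)
    (x : EuclideanSpace ℝ (Fin n)) :
    reflLin (a • sgl i) x = x - (2 * x i) • sgl i := by
  rw [reflLin_apply]
  have h1 : ⟪a • sgl i, x⟫ = a * x i := by
    rw [real_inner_smul_left, inner_sgl_left]
  have h2 : ⟪a • sgl i, a • sgl i⟫ = 1 := by
    rw [real_inner_smul_left, real_inner_smul_right, inner_sgl_left]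
    rcases ha with h | h <;> subst h <;> simp
  rw [h1, h2]
  rcases ha with h | h <;> subst h <;> match_scalars <;> ring

theorem refl_long_apply {a b : ℝ} (ha : a = 1 ∨ a = -1) (hb : b = 1 ∨ b = -1)
    {i j : Fin n} (hij : i ≠ j) (x : EuclideanSpace ℝ (Fin n)) :
    reflLin (a • sgl i + b • sgl j) x
      = x - (a * x i + b * x j) • (a • sgl i + b • sgl j) := by
  rw [reflLin_apply]
  have h1 : ⟪a • sgl i + b • sgl j, x⟫ = a * x i + b * x j := by
    rw [inner_add_left, real_inner_smul_left, real_inner_smul_left, inner_sgl_left,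
      inner_sgl_left]
  have h2 : ⟪a • sgl i + b • sgl j, a • sgl i + b • sgl j⟫ = 2 := by
    rw [inner_add_left, real_inner_smul_left, real_inner_smul_left, inner_sgl_left,
      inner_sgl_left]
    simp only [PiLp.add_apply, PiLp.smul_apply, sgl_apply, smul_eq_mul]
    rw [if_neg hij, if_neg (show ¬ j = i from fun h => hij h.symm)]
    simp only [if_true]
    rcases ha with h | h <;> rcases hb with h' | h' <;> subst h h' <;> norm_num
  rw [h1, h2]
  congr 1
  ring_nf

end Stmt6Aux

namespace Stmt6Aux

variable {n : ℕ}

abbrev Gn (n : ℕ) := EuclideanSpace ℝ (Fin n) ≃ₗᵢ[ℝ] EuclideanSpace ℝ (Fin n)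

/-- signed permutation property -/
def IsSP (g : Gn n) : Prop :=
  ∀ i : Fin n, ∃ j : Fin n, ∃ s : ℝ, (s = 1 ∨ s = -1) ∧ g (sgl i) = s • sgl j

theorem isSP_one : IsSP (1 : Gn n) := fun i => ⟨i, 1, Or.inl rfl, by simp [sgl]⟩

theorem isSP_mul {g h : Gn n} (hg : IsSP g) (hh : IsSP h) : IsSP (g * h) := by
  intro i
  obtain ⟨j, s, hs, hj⟩ := hh i
  obtain ⟨k, t, ht, hk⟩ := hg j
  refine ⟨k, t * s, ?_, ?_⟩
  · rcases hs with h1 | h1 <;> rcases ht with h2 | h2 <;> subst h1 h2 <;> norm_num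
  · have : (g * h) (sgl i) = g (h (sgl i)) := rfl
    rw [this, hj, map_smul, hk, smul_smul, mul_comm]

theorem isSP_refl_short {a : ℝ} (ha : a = 1 ∨ a = -1) (i : Fin n) :
    IsSP (reflLin (a • sgl i)) := by
  intro k
  rw [refl_short_apply ha]
  by_cases hk : k = i
  · subst hk
    refine ⟨k, -1, Or.inr rfl, ?_⟩
    have h1 : sgl k k = (1:ℝ) := by simp
    rw [h1]
    match_scalars <;> ring
  · refine ⟨k, 1, Or.inl rfl, ?_⟩
    have h1 : sgl k i = (0:ℝ) := by simp [Ne.symm hk]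
    rw [h1]
    match_scalars <;> ring

theorem isSP_refl_long {a b : ℝ} (ha : a = 1 ∨ a = -1) (hb : b = 1 ∨ b = -1)
    {i j : Fin n} (hij : i ≠ j) : IsSP (reflLin (a • sgl i + b • sgl j)) := by
  intro k
  rw [refl_long_apply ha hb hij]
  by_cases hki : k = i
  · subst hki
    refine ⟨j, -(a * b), ?_, ?_⟩
    · rcases ha with h1 | h1 <;> rcases hb with h2 | h2 <;> subst h1 h2 <;> norm_num
    · have h1 : sgl k k = (1:ℝ) := by simp
      have h2 : sgl k j = (0:ℝ) := by simp [Ne.symm hij]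
      rw [h1, h2]
      rcases ha with h3 | h3 <;> rcases hb with h4 | h4 <;> subst h3 h4 <;>
        match_scalars <;> ring
  · by_cases hkj : k = j
    · subst hkj
      refine ⟨i, -(a * b), ?_, ?_⟩
      · rcases ha with h1 | h1 <;> rcases hb with h2 | h2 <;> subst h1 h2 <;> norm_num
      · have h1 : sgl k k = (1:ℝ) := by simp
        have h2 : sgl k i = (0:ℝ) := by simp [Ne.symm hki]
        rw [h1, h2]
        rcases ha with h3 | h3 <;> rcases hb with h4 | h4 <;> subst h3 h4 <;>
          match_scalars <;> ring
    · refine ⟨k, 1, Or.inl rfl, ?_⟩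
      have h1 : sgl k i = (0:ℝ) := by simp [Ne.symm hki]
      have h2 : sgl k j = (0:ℝ) := by simp [Ne.symm hkj]
      rw [h1, h2]
      match_scalars <;> ring

theorem isSP_refl_root {v : EuclideanSpace ℝ (Fin n)} (hv : v ∈ BRootsM n) :
    IsSP (reflLin v) := by
  rcases hv with ⟨i, j, a, b, hij, ha, hb, rfl⟩ | ⟨i, a, ha, rfl⟩
  · exact isSP_refl_long ha hb hij
  · exact isSP_refl_short ha i

theorem weylB_sp {g : Gn n} (hg : g ∈ WeylB n) : IsSP g ∧ IsSP g⁻¹ := by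
  refine Subgroup.closure_induction ?_ ?_ ?_ ?_ hg
  · rintro x ⟨v, hv, rfl⟩
    refine ⟨isSP_refl_root hv, ?_⟩
    rw [reflLin_inv]
    exact isSP_refl_root hv
  · exact ⟨isSP_one, by rw [inv_one]; exact isSP_one⟩
  · rintro x y _ _ ⟨hx, hx'⟩ ⟨hy, hy'⟩
    exact ⟨isSP_mul hx hy, by rw [mul_inv_rev]; exact isSP_mul hy' hx'⟩
  · rintro x _ ⟨hx, hx'⟩
    exact ⟨hx', by rw [inv_inv]; exact hx⟩

theorem root_mem_weylB {v : EuclideanSpace ℝ (Fin n)} (hv : v ∈ BRootsM n) :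
    reflLin v ∈ WeylB n :=
  Subgroup.subset_closure ⟨v, hv, rfl⟩

theorem refl_isSP_root {v : EuclideanSpace ℝ (Fin n)} (hv : v ≠ 0)
    (hsp : IsSP (reflLin v)) : ∃ w ∈ BRootsM n, reflLin v = reflLin w := by
  obtain ⟨i, hi⟩ : ∃ i, v i ≠ 0 := by
    by_contra h
    push_neg at h
    exact hv (by ext k; exact h k)
  have hvv : ⟪v, v⟫ ≠ 0 := inner_self_ne_zero.mpr hv
  obtain ⟨j, s, hs, hj⟩ := hsp i
  have hvi : ⟪v, sgl i⟫ = v i := by rw [real_inner_comm, inner_sgl_left]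
  have h1 : reflLin v (sgl i) = sgl i - (2 * v i / ⟪v, v⟫) • v := by
    rw [reflLin_apply, hvi]
  set c := 2 * v i / ⟪v, v⟫ with hc
  have hcne : c ≠ 0 := div_ne_zero (mul_ne_zero two_ne_zero hi) hvv
  have h3 : sgl i - c • v = s • sgl j := h1.symm.trans hj
  have h2 : c • v = sgl i - s • sgl j := by rw [← h3]; module
  by_cases hji : j = i
  · subst hji
    rcases hs with h | h
    · exfalso
      subst h
      have h4 : c • v = 0 := by rw [h2]; module
      rcases smul_eq_zero.mp h4 with h5 | h5
      · exact hcne h5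
      · exact hv h5
    · subst h
      have h4 : ((2:ℝ)⁻¹ * c) • v = sgl j := by
        rw [← smul_smul, h2]; match_scalars <;> ring
      refine ⟨sgl j, Or.inr ⟨j, 1, Or.inl rfl, by rw [one_smul]; rfl⟩, ?_⟩
      rw [← h4, reflLin_smul (mul_ne_zero (by norm_num) hcne)]
  · have hsign : -s = 1 ∨ -s = -1 := by
      rcases hs with h | h <;> subst h <;> norm_num
    refine ⟨(1:ℝ) • sgl i + (-s) • sgl j, Or.inl ⟨i, j, 1, -s,
      fun h => hji h.symm, Or.inl rfl, hsign, rfl⟩, ?_⟩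
    have h5 : c • v = (1:ℝ) • sgl i + (-s) • sgl j := by rw [h2]; module
    rw [← h5, reflLin_smul hcne]

theorem root_ne_zero {v : EuclideanSpace ℝ (Fin n)} (hv : v ∈ BRootsM n) : v ≠ 0 := by
  rcases hv with ⟨i, j, a, b, hij, ha, hb, rfl⟩ | ⟨i, a, ha, rfl⟩
  · intro h0
    have h1 := congrArg (fun z : EuclideanSpace ℝ (Fin n) => z i) h0
    simp only [PiLp.add_apply, PiLp.smul_apply, EuclideanSpace.single_apply, smul_eq_mul,
      PiLp.zero_apply, if_pos rfl, if_neg hij] at h1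
    rcases ha with h | h <;> rw [h] at h1 <;> norm_num at h1
  · intro h0
    have h1 := congrArg (fun z : EuclideanSpace ℝ (Fin n) => z i) h0
    simp only [PiLp.smul_apply, EuclideanSpace.single_apply, smul_eq_mul,
      PiLp.zero_apply, if_pos rfl] at h1
    rcases ha with h | h <;> rw [h] at h1 <;> norm_num at h1

end Stmt6Aux

namespace Stmt6Aux

variable {n : ℕ}

/-- even signed permutation property -/
def EP (g : Gn n) : Prop :=
  ∃ σ : Equiv.Perm (Fin n), ∃ s : Fin n → ℝ,
    (∀ i, s i = 1 ∨ s i = -1) ∧ (∏ i, s i) = 1 ∧ ∀ i, g (sgl i) = s i • sgl (σ i)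

theorem EP_one : EP (1 : Gn n) :=
  ⟨1, fun _ => 1, fun _ => Or.inl rfl, by simp, fun i => by simp [sgl]⟩

theorem EP_mul {g h : Gn n} (hg : EP g) (hh : EP h) : EP (g * h) := by
  obtain ⟨σg, sg, hsg, hpg, hig⟩ := hg
  obtain ⟨σh, sh, hsh, hph, hih⟩ := hh
  refine ⟨σh.trans σg, fun i => sh i * sg (σh i), ?_, ?_, ?_⟩
  · intro i
    dsimp only
    rcases hsh i with h1 | h1 <;> rcases hsg (σh i) with h2 | h2 <;> rw [h1, h2] <;> norm_num
  · dsimp only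
    rw [Finset.prod_mul_distrib, hph, Equiv.prod_comp σh sg, hpg, one_mul]
  · intro i
    have : (g * h) (sgl i) = g (h (sgl i)) := rfl
    rw [this, hih, map_smul, hig, smul_smul, Equiv.trans_apply]


theorem EP_refl_long {a b : ℝ} (ha : a = 1 ∨ a = -1) (hb : b = 1 ∨ b = -1)
    {i j : Fin n} (hij : i ≠ j) : EP (reflLin (a • sgl i + b • sgl j)) := by
  classical
  refine ⟨Equiv.swap i j, fun k => if k = i ∨ k = j then -(a * b) else 1, ?_, ?_, ?_⟩
  · intro k
    dsimp only
    by_cases hk : k = i ∨ k = j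
    · rw [if_pos hk]
      rcases ha with h1 | h1 <;> rcases hb with h2 | h2 <;> rw [h1, h2] <;> norm_num
    · rw [if_neg hk]; exact Or.inl rfl
  · dsimp only
    have h1 : ∀ k ∈ Finset.univ, k ∉ ({i, j} : Finset (Fin n)) →
        (if k = i ∨ k = j then -(a * b) else 1) = 1 := by
      intro k _ hk
      rw [Finset.mem_insert, Finset.mem_singleton] at hk
      push_neg at hk
      rw [if_neg (by tauto)]
    rw [← Finset.prod_subset (Finset.subset_univ ({i, j} : Finset (Fin n))) h1,
      Finset.prod_pair hij]
    rw [if_pos (Or.inl rfl), if_pos (Or.inr rfl)]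
    rcases ha with h1 | h1 <;> rcases hb with h2 | h2 <;> rw [h1, h2] <;> norm_num
  · intro k
    dsimp only
    rw [refl_long_apply ha hb hij]
    by_cases hki : k = i
    · subst hki
      rw [if_pos (Or.inl rfl), Equiv.swap_apply_left]
      have h1 : sgl k k = (1:ℝ) := by simp
      have h2 : sgl k j = (0:ℝ) := by simp [Ne.symm hij]
      rw [h1, h2]
      rcases ha with h3 | h3 <;> rcases hb with h4 | h4 <;> subst h3 h4 <;>
        match_scalars <;> ring
    · by_cases hkj : k = j
      · subst hkj
        rw [if_pos (Or.inr rfl), Equiv.swap_apply_right]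
        have h1 : sgl k k = (1:ℝ) := by simp
        have h2 : sgl k i = (0:ℝ) := by simp [Ne.symm hki]
        rw [h1, h2]
        rcases ha with h3 | h3 <;> rcases hb with h4 | h4 <;> subst h3 h4 <;>
          match_scalars <;> ring
      · rw [if_neg (by tauto), Equiv.swap_apply_of_ne_of_ne hki hkj]
        have h1 : sgl k i = (0:ℝ) := by simp [Ne.symm hki]
        have h2 : sgl k j = (0:ℝ) := by simp [Ne.symm hkj]
        rw [h1, h2]
        match_scalars <;> ring

theorem smul_sgl_inj {s t : ℝ} {j k : Fin n} (hs : s ≠ 0) (h : s • sgl j = t • sgl k) :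
    j = k ∧ s = t := by
  have h1 := congrArg (fun z : EuclideanSpace ℝ (Fin n) => z j) h
  by_cases hjk : j = k
  · subst hjk
    simp only [PiLp.smul_apply, sgl_apply, smul_eq_mul, eq_self_iff_true, if_true,
      mul_one] at h1
    exact ⟨rfl, h1⟩
  · exfalso
    simp only [PiLp.smul_apply, sgl_apply, smul_eq_mul, eq_self_iff_true, if_true,
      if_neg hjk, mul_one, mul_zero] at h1
    exact hs h1

theorem weylD_EP {g : Gn n} (hg : g ∈ WeylD n) : EP g ∧ EP g⁻¹ := by
  refine Subgroup.closure_induction ?_ ?_ ?_ ?_ hg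
  · rintro x ⟨v, ⟨i, j, a, b, hij, ha, hb, rfl⟩, rfl⟩
    refine ⟨EP_refl_long ha hb hij, ?_⟩
    rw [reflLin_inv]
    exact EP_refl_long ha hb hij
  · exact ⟨EP_one, by rw [inv_one]; exact EP_one⟩
  · rintro x y _ _ ⟨hx, hx'⟩ ⟨hy, hy'⟩
    exact ⟨EP_mul hx hy, by rw [mul_inv_rev]; exact EP_mul hy' hx'⟩
  · rintro x _ ⟨hx, hx'⟩
    exact ⟨hx', by rw [inv_inv]; exact hx⟩

theorem weylD_ne_weylB (hn : 2 ≤ n) : WeylD n ≠ WeylB n := by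
  intro h
  have i0 : Fin n := ⟨0, by omega⟩
  have hmem : reflLin ((1:ℝ) • sgl i0) ∈ WeylB n :=
    root_mem_weylB (Or.inr ⟨i0, 1, Or.inl rfl, rfl⟩)
  rw [← h] at hmem
  obtain ⟨⟨σ, s, hs, hprod, himg⟩, -⟩ := weylD_EP hmem
  have key : ∀ i, s i = if i = i0 then -1 else 1 := by
    intro i
    have h1 : s i • sgl (σ i) = sgl i - (2 * sgl i i0) • sgl i0 :=
      (himg i).symm.trans (refl_short_apply (Or.inl rfl) i0 (sgl i))
    have hsne : s i ≠ 0 := by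
      rcases hs i with h3 | h3 <;> rw [h3] <;> norm_num
    by_cases hii : i = i0
    · subst hii
      rw [if_pos rfl]
      have hR : sgl i - (2 * sgl i i) • sgl i = (-1:ℝ) • (sgl i : EuclideanSpace ℝ (Fin n)) := by
        rw [show sgl i i = (1:ℝ) by simp]
        match_scalars <;> ring
      exact (smul_sgl_inj hsne (h1.trans hR)).2
    · rw [if_neg hii]
      have hR : sgl i - (2 * sgl i i0) • sgl i0 = (1:ℝ) • (sgl i : EuclideanSpace ℝ (Fin n)) := by
        rw [show sgl i i0 = (0:ℝ) by simp [Ne.symm hii]]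
        match_scalars <;> ring
      exact (smul_sgl_inj hsne (h1.trans hR)).2
  have hfin : (∏ i, s i) = s i0 := by
    refine Finset.prod_eq_single i0 (fun b _ hb => ?_) (fun h => absurd (Finset.mem_univ i0) h)
    rw [key b, if_neg hb]
  rw [hfin, key i0, if_pos rfl] at hprod
  norm_num at hprod

end Stmt6Aux

namespace Stmt6Aux

variable {n : ℕ}

theorem inner_eq_sum (x y : EuclideanSpace ℝ (Fin n)) : ⟪x, y⟫ = ∑ i, x i * y i := by
  rw [PiLp.inner_apply]
  simp [RCLike.inner_apply, mul_comm]

theorem reflLin_apply_coord (v x : EuclideanSpace ℝ (Fin n)) (k : Fin n) :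
    reflLin v x k = x k - (2 * ⟪v, x⟫ / ⟪v, v⟫) * v k := by
  rw [reflLin_apply]
  simp [PiLp.sub_apply, PiLp.smul_apply]

/-- preserves the splitting of coordinates given by `A` -/
def PresA (A : Finset (Fin n)) (g : Gn n) : Prop :=
  (∀ x : EuclideanSpace ℝ (Fin n), (∀ i, i ∉ A → x i = 0) → ∀ i, i ∉ A → g x i = 0) ∧
  (∀ x : EuclideanSpace ℝ (Fin n), (∀ i, i ∈ A → x i = 0) → ∀ i, i ∈ A → g x i = 0)

theorem presA_one (A : Finset (Fin n)) : PresA A (1 : Gn n) :=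
  ⟨fun x hx i hi => hx i hi, fun x hx i hi => hx i hi⟩

theorem presA_mul {A : Finset (Fin n)} {g h : Gn n} (hg : PresA A g) (hh : PresA A h) :
    PresA A (g * h) := by
  constructor
  · intro x hx i hi
    have : (g * h) x = g (h x) := rfl
    rw [this]
    exact hg.1 (h x) (hh.1 x hx) i hi
  · intro x hx i hi
    have : (g * h) x = g (h x) := rfl
    rw [this]
    exact hg.2 (h x) (hh.2 x hx) i hi

theorem presA_refl {A : Finset (Fin n)} {v : EuclideanSpace ℝ (Fin n)}
    (hvs : (∀ i, i ∉ A → v i = 0) ∨ ∀ i, i ∈ A → v i = 0) : PresA A (reflLin v) := by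
  rcases hvs with hsupp | hsupp
  · constructor
    · intro x hx i hi
      rw [reflLin_apply_coord, hx i hi, hsupp i hi]
      ring
    · intro x hx i hi
      have hinner : ⟪v, x⟫ = 0 := by
        rw [inner_eq_sum]
        refine Finset.sum_eq_zero fun k _ => ?_
        by_cases hk : k ∈ A
        · rw [hx k hk, mul_zero]
        · rw [hsupp k hk, zero_mul]
      rw [reflLin_apply_coord, hinner]
      rw [hx i hi]
      ring
  · constructor
    · intro x hx i hi
      have hinner : ⟪v, x⟫ = 0 := by
        rw [inner_eq_sum]
        refine Finset.sum_eq_zero fun k _ => ?_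
        by_cases hk : k ∈ A
        · rw [hsupp k hk, zero_mul]
        · rw [hx k hk, mul_zero]
      rw [reflLin_apply_coord, hinner]
      rw [hx i hi]
      ring
    · intro x hx i hi
      rw [reflLin_apply_coord, hx i hi, hsupp i hi]
      ring

theorem weylBB_presA {A : Finset (Fin n)} {g : Gn n} (hg : g ∈ WeylBB n A) :
    PresA A g ∧ PresA A g⁻¹ := by
  refine Subgroup.closure_induction ?_ ?_ ?_ ?_ hg
  · rintro x ⟨v, ⟨hvB, hvs⟩, rfl⟩
    refine ⟨presA_refl hvs, ?_⟩
    rw [reflLin_inv]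
    exact presA_refl hvs
  · exact ⟨presA_one A, by rw [inv_one]; exact presA_one A⟩
  · rintro x y _ _ ⟨hx, hx'⟩ ⟨hy, hy'⟩
    exact ⟨presA_mul hx hy, by rw [mul_inv_rev]; exact presA_mul hy' hx'⟩
  · rintro x _ ⟨hx, hx'⟩
    exact ⟨hx', by rw [inv_inv]; exact hx⟩

theorem weylBB_ne_weylB {A : Finset (Fin n)} {a b : Fin n} (ha : a ∈ A) (hb : b ∉ A) :
    WeylBB n A ≠ WeylB n := by
  intro h
  have hab : a ≠ b := fun e => hb (e ▸ ha)
  have hroot : ((1:ℝ) • sgl a + (-1:ℝ) • sgl b : EuclideanSpace ℝ (Fin n)) ∈ BRootsM n :=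
    Or.inl ⟨a, b, 1, -1, hab, Or.inl rfl, Or.inr rfl, rfl⟩
  have hmem : reflLin ((1:ℝ) • sgl a + (-1:ℝ) • sgl b) ∈ WeylBB n A := by
    rw [h]; exact root_mem_weylB hroot
  obtain ⟨⟨h1, -⟩, -⟩ := weylBB_presA hmem
  have hx : ∀ i, i ∉ A → (sgl a : EuclideanSpace ℝ (Fin n)) i = 0 := by
    intro i hi
    have hia : ¬ i = a := fun e => hi (e ▸ ha)
    simp [hia]
  have h2 := h1 (sgl a) hx b hb
  rw [refl_long_apply (Or.inl rfl) (Or.inr rfl) hab] at h2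
  simp only [PiLp.sub_apply, PiLp.add_apply, PiLp.smul_apply, sgl_apply, smul_eq_mul,
    eq_self_iff_true, if_true, if_neg hab, if_neg (Ne.symm hab)] at h2
  norm_num at h2

theorem weylBB_compl (A : Finset (Fin n)) : WeylBB n A = WeylBB n Aᶜ := by
  unfold WeylBB
  have hset : {v ∈ BRootsM n | (∀ i, i ∉ A → v i = 0) ∨ ∀ i, i ∈ A → v i = 0}
      = {v ∈ BRootsM n | (∀ i, i ∉ Aᶜ → v i = 0) ∨ ∀ i, i ∈ Aᶜ → v i = 0} := by
    ext v
    simp only [Set.mem_setOf_eq, Finset.mem_compl, not_not]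
    tauto
  rw [hset]

theorem weylD_reflSub : IsReflSubgroupOf (WeylD n) (WeylB n) := by
  refine ⟨reflLin '' DRootsM n, ?_, ?_, rfl⟩
  · rintro g ⟨v, hv, rfl⟩
    exact ⟨v, root_ne_zero (Or.inl hv), rfl⟩
  · rintro g ⟨v, hv, rfl⟩
    exact root_mem_weylB (Or.inl hv)

theorem weylBB_reflSub (A : Finset (Fin n)) : IsReflSubgroupOf (WeylBB n A) (WeylB n) := by
  refine ⟨_, ?_, ?_, rfl⟩
  · rintro g ⟨v, ⟨hvB, -⟩, rfl⟩
    exact ⟨v, root_ne_zero hvB, rfl⟩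
  · rintro g ⟨v, ⟨hvB, -⟩, rfl⟩
    exact root_mem_weylB hvB

end Stmt6Aux

namespace Stmt6Aux

theorem map_conj_one_eq {G : Type*} [Group G] (H : Subgroup G) :
    Subgroup.map (MulAut.conj (1:G)).toMonoidHom H = H := by
  ext x
  constructor
  · rintro ⟨y, hy, rfl⟩
    simpa [MulAut.conj] using hy
  · intro hx
    exact ⟨x, hx, by simp [MulAut.conj]⟩

end Stmt6Aux

open Stmt6Aux

/-- every maximal proper reflection subgroup of the Weyl group `W(B_n)`
(`n ≥ 2`) is, up to conjugation, either `W(D_n)` or `W(B_k) × W(B_{n-k})` for some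
`1 ≤ k ≤ ⌊n/2⌋`. -/
theorem stmt_6 (n : ℕ) (hn : 2 ≤ n)
    (H : Subgroup (EuclideanSpace ℝ (Fin n) ≃ₗᵢ[ℝ] EuclideanSpace ℝ (Fin n)))
    (hH : IsReflSubgroupOf H (WeylB n)) (hne : H ≠ WeylB n)
    (hmax : ∀ K, IsReflSubgroupOf K (WeylB n) → H ≤ K → K = H ∨ K = WeylB n) :
    ∃ g ∈ WeylB n,
      Subgroup.map (MulAut.conj g).toMonoidHom H = WeylD n ∨
      ∃ A : Finset (Fin n), 1 ≤ A.card ∧ A.card ≤ n / 2 ∧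
        Subgroup.map (MulAut.conj g).toMonoidHom H = WeylBB n A := by
  classical
  obtain ⟨R, hR1, hR2, hR3⟩ := hH
  have hHW : H ≤ WeylB n := by
    rw [hR3]; exact (Subgroup.closure_le _).mpr hR2
  set Ψ : Set (EuclideanSpace ℝ (Fin n)) := {α | α ∈ BRootsM n ∧ reflLin α ∈ H} with hΨ
  have hgen : H = Subgroup.closure (reflLin '' Ψ) := by
    apply le_antisymm
    · rw [hR3]
      refine (Subgroup.closure_le _).mpr ?_
      intro g hg
      obtain ⟨v, hv0, rfl⟩ := hR1 g hg
      have hgB : reflLin v ∈ WeylB n := hR2 hg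
      obtain ⟨w, hwB, hvw⟩ := refl_isSP_root hv0 (weylB_sp hgB).1
      have hgH : reflLin v ∈ H := by rw [hR3]; exact Subgroup.subset_closure hg
      have hwΨ : w ∈ Ψ := ⟨hwB, by rw [← hvw]; exact hgH⟩
      rw [hvw]
      exact Subgroup.subset_closure ⟨w, hwΨ, rfl⟩
    · refine (Subgroup.closure_le _).mpr ?_
      rintro g ⟨α, hα, rfl⟩
      exact hα.2
  have hpsi_conj : ∀ α ∈ Ψ, ∀ β ∈ Ψ, reflLin (reflLin α β) ∈ H := by
    intro α hα β hβ
    rw [reflLin_conj]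
    exact mul_mem (mul_mem hα.2 hβ.2) (inv_mem hα.2)
  have hshort_norm : ∀ (i : Fin n) (a : ℝ), (a = 1 ∨ a = -1) →
      (a • sgl i : EuclideanSpace ℝ (Fin n)) ∈ Ψ → (sgl i : EuclideanSpace ℝ (Fin n)) ∈ Ψ := by
    intro i a ha hmem
    refine ⟨Or.inr ⟨i, 1, Or.inl rfl, (one_smul ℝ _).symm⟩, ?_⟩
    have h1 : reflLin (sgl i : EuclideanSpace ℝ (Fin n)) = reflLin (a • sgl i) := by
      rcases ha with h | h
      · rw [h, one_smul]
      · rw [h, reflLin_smul (by norm_num : (-1:ℝ) ≠ 0)]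
    rw [h1]
    exact hmem.2
  set Rel : Fin n → Fin n → Prop := fun i j => i ≠ j ∧ ∃ a b : ℝ,
    (a = 1 ∨ a = -1) ∧ (b = 1 ∨ b = -1) ∧
    (a • sgl i + b • sgl j : EuclideanSpace ℝ (Fin n)) ∈ Ψ with hRel
  have hRelSymm : ∀ i j, Rel i j → Rel j i := by
    rintro i j ⟨hij, a, b, ha, hb, hmem⟩
    refine ⟨Ne.symm hij, b, a, hb, ha, ?_⟩
    rwa [add_comm] at hmem
  have hRelTrans : ∀ i0 i j, Rel i0 i → Rel i j → i0 = j ∨ Rel i0 j := by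
    intro i0 i j h1 h2
    by_cases hij0 : i0 = j
    · exact Or.inl hij0
    right
    obtain ⟨hne1, a', b', ha', hb', hm1⟩ := h1
    obtain ⟨hne2, a, b, ha, hb, hm2⟩ := h2
    have hsign : -(a * b * b') = 1 ∨ -(a * b * b') = -1 := by
      rcases ha with h | h <;> rcases hb with h' | h' <;> rcases hb' with h'' | h'' <;>
        subst h h' h'' <;> norm_num
    refine ⟨hij0, a', -(a * b * b'), ha', hsign, ?_⟩
    have e1 : (a' • sgl i0 + b' • sgl i : EuclideanSpace ℝ (Fin n)) i = b' := by
      simp [Ne.symm hne1]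
    have e2 : (a' • sgl i0 + b' • sgl i : EuclideanSpace ℝ (Fin n)) j = 0 := by
      simp [show ¬ j = i0 from fun h => hij0 h.symm, show ¬ j = i from fun h => hne2 h.symm]
    have hcomp : reflLin (a • sgl i + b • sgl j) (a' • sgl i0 + b' • sgl i)
        = a' • sgl i0 + (-(a * b * b')) • sgl j := by
      rw [refl_long_apply ha hb hne2, e1, e2]
      rcases ha with h | h <;> rcases hb with h' | h' <;> subst h h' <;>
        match_scalars <;> ring
    refine ⟨Or.inl ⟨i0, j, a', -(a * b * b'), hij0, ha', hsign, rfl⟩, ?_⟩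
    rw [← hcomp]
    exact hpsi_conj _ hm2 _ hm1
  have hshort_prop : ∀ i j, (sgl i : EuclideanSpace ℝ (Fin n)) ∈ Ψ → Rel i j →
      (sgl j : EuclideanSpace ℝ (Fin n)) ∈ Ψ := by
    rintro i j hi ⟨hij, a, b, ha, hb, hm⟩
    have hsign : -(a * b) = 1 ∨ -(a * b) = -1 := by
      rcases ha with h | h <;> rcases hb with h' | h' <;> subst h h' <;> norm_num
    have hcomp : reflLin (a • sgl i + b • sgl j) (sgl i) = (-(a * b)) • sgl j := by
      rw [refl_long_apply ha hb hij,
        show (sgl i : EuclideanSpace ℝ (Fin n)) i = (1:ℝ) by simp,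
        show (sgl i : EuclideanSpace ℝ (Fin n)) j = (0:ℝ) by simp [Ne.symm hij]]
      rcases ha with h | h <;> rcases hb with h' | h' <;> subst h h' <;>
        match_scalars <;> ring
    refine hshort_norm j (-(a * b)) hsign ⟨Or.inr ⟨j, -(a * b), hsign, rfl⟩, ?_⟩
    rw [← hcomp]
    exact hpsi_conj _ hm _ hi
  by_cases hsh : ∃ i : Fin n, (sgl i : EuclideanSpace ℝ (Fin n)) ∈ Ψ
  · by_cases hconn : ∀ i j : Fin n, i = j ∨ Rel i j
    · -- contradiction: H = WeylB n
      exfalso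
      obtain ⟨i1, hi1⟩ := hsh
      have hallshort : ∀ j, (sgl j : EuclideanSpace ℝ (Fin n)) ∈ Ψ := by
        intro j
        rcases hconn i1 j with h | h
        · exact h ▸ hi1
        · exact hshort_prop i1 j hi1 h
      have hflip : ∀ (i j : Fin n), i ≠ j → ∀ a b : ℝ, (a = 1 ∨ a = -1) → (b = 1 ∨ b = -1) →
          (a • sgl i + b • sgl j : EuclideanSpace ℝ (Fin n)) ∈ Ψ →
          (a • sgl i + (-b) • sgl j : EuclideanSpace ℝ (Fin n)) ∈ Ψ := by
        intro i j hij a b ha hb hm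
        have h0 : reflLin (sgl j : EuclideanSpace ℝ (Fin n)) = reflLin ((1:ℝ) • sgl j) := by
          rw [one_smul]
        have hcomp : reflLin (sgl j : EuclideanSpace ℝ (Fin n)) (a • sgl i + b • sgl j)
            = a • sgl i + (-b) • sgl j := by
          rw [h0, refl_short_apply (Or.inl rfl)]
          have e1 : (a • sgl i + b • sgl j : EuclideanSpace ℝ (Fin n)) j = b := by
            simp [Ne.symm hij]
          rw [e1]
          match_scalars <;> ring
        have hsignb : -b = 1 ∨ -b = -1 := by
          rcases hb with h | h <;> subst h <;> norm_num
        refine ⟨Or.inl ⟨i, j, a, -b, hij, ha, hsignb, rfl⟩, ?_⟩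
        rw [← hcomp]
        exact hpsi_conj _ (hallshort j) _ hm
      have hneg : ∀ (i j : Fin n), i ≠ j → ∀ a b : ℝ, (a = 1 ∨ a = -1) → (b = 1 ∨ b = -1) →
          (a • sgl i + b • sgl j : EuclideanSpace ℝ (Fin n)) ∈ Ψ →
          ((-a) • sgl i + (-b) • sgl j : EuclideanSpace ℝ (Fin n)) ∈ Ψ := by
        intro i j hij a b ha hb hm
        have hsa : -a = 1 ∨ -a = -1 := by rcases ha with h | h <;> subst h <;> norm_num
        have hsb : -b = 1 ∨ -b = -1 := by rcases hb with h | h <;> subst h <;> norm_num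
        have hv : ((-a) • sgl i + (-b) • sgl j : EuclideanSpace ℝ (Fin n))
            = (-1 : ℝ) • (a • sgl i + b • sgl j) := by
          match_scalars <;> ring
        refine ⟨Or.inl ⟨i, j, -a, -b, hij, hsa, hsb, rfl⟩, ?_⟩
        rw [hv, reflLin_smul (by norm_num : (-1:ℝ) ≠ 0)]
        exact hm.2
      have hall : ∀ (i j : Fin n), i ≠ j → ∀ a b : ℝ, (a = 1 ∨ a = -1) → (b = 1 ∨ b = -1) →
          (a • sgl i + b • sgl j : EuclideanSpace ℝ (Fin n)) ∈ Ψ := by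
        intro i j hij a b ha hb
        rcases hconn i j with h | h
        · exact absurd h hij
        obtain ⟨-, a0, b0, ha0, hb0, hm0⟩ := h
        have h1 := hflip i j hij a0 b0 ha0 hb0 hm0
        have h2 := hneg i j hij a0 b0 ha0 hb0 hm0
        have h3 := hneg i j hij a0 (-b0) ha0
          (by rcases hb0 with h | h <;> subst h <;> norm_num) h1
        rcases ha0 with h4 | h4 <;> rcases hb0 with h5 | h5 <;> subst h4 h5 <;>
          rcases ha with h6 | h6 <;> rcases hb with h7 | h7 <;> subst h6 h7 <;>
          simp only [neg_neg] at h1 h2 h3 <;>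
          first
            | exact hm0
            | exact h1
            | exact h2
            | exact h3
      apply hne
      refine le_antisymm hHW ?_
      refine (Subgroup.closure_le _).mpr ?_
      rintro g ⟨v, hv, rfl⟩
      rcases hv with ⟨i, j, a, b, hij, ha, hb, rfl⟩ | ⟨i, a, ha, rfl⟩
      · exact (hall i j hij a b ha hb).2
      · have h1 : reflLin (a • (EuclideanSpace.single i (1:ℝ)))
            = reflLin (sgl i : EuclideanSpace ℝ (Fin n)) := by
          rcases ha with h | h
          · rw [h, one_smul]; rfl
          · rw [h, reflLin_smul (by norm_num : (-1:ℝ) ≠ 0)]; rfl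
        rw [h1]
        exact (hallshort i).2
    · -- the B_k × B_{n-k} case
      push_neg at hconn
      obtain ⟨i0, j0, hne0, hnotrel⟩ := hconn
      set A : Finset (Fin n) := Finset.univ.filter (fun i => i = i0 ∨ Rel i0 i) with hA
      have hi0A : i0 ∈ A := by simp [hA]
      have hj0A : j0 ∉ A := by
        simp only [hA, Finset.mem_filter, Finset.mem_univ, true_and]
        rintro (h | h)
        · exact hne0 h.symm
        · exact hnotrel h
      have hmemA : ∀ i j, Rel i j → (i ∈ A → j ∈ A) := by
        intro i j hR hi
        simp only [hA, Finset.mem_filter, Finset.mem_univ, true_and] at hi ⊢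
        rcases hi with h | h
        · exact Or.inr (h ▸ hR)
        · rcases hRelTrans i0 i j h hR with h' | h'
          · exact Or.inl h'.symm
          · exact Or.inr h'
      have hsub : Ψ ⊆ {v ∈ BRootsM n | (∀ i, i ∉ A → v i = 0) ∨ ∀ i, i ∈ A → v i = 0} := by
        rintro α ⟨hαB, hαH⟩
        refine ⟨hαB, ?_⟩
        rcases hαB with ⟨i, j, a, b, hij, ha, hb, rfl⟩ | ⟨i, a, ha, rfl⟩
        · have hRij : Rel i j := ⟨hij, a, b, ha, hb, ⟨Or.inl ⟨i, j, a, b, hij, ha, hb, rfl⟩, hαH⟩⟩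
          have hiff : i ∈ A ↔ j ∈ A := ⟨hmemA i j hRij, hmemA j i (hRelSymm _ _ hRij)⟩
          by_cases hiA : i ∈ A
          · left
            intro k hk
            have hki : ¬ k = i := fun e => hk (e ▸ hiA)
            have hkj : ¬ k = j := fun e => hk (e ▸ hiff.mp hiA)
            simp [hki, hkj]
          · right
            intro k hk
            have hki : ¬ k = i := fun e => hiA (e ▸ hk)
            have hjA : j ∉ A := fun hj => hiA (hiff.mpr hj)
            have hkj : ¬ k = j := fun e => hjA (e ▸ hk)
            simp [hki, hkj]
        · by_cases hiA : i ∈ A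
          · left
            intro k hk
            have hki : ¬ k = i := fun e => hk (e ▸ hiA)
            simp [hki]
          · right
            intro k hk
            have hki : ¬ k = i := fun e => hiA (e ▸ hk)
            simp [hki]
      have hHBB : H ≤ WeylBB n A := by
        rw [hgen]
        refine (Subgroup.closure_le _).mpr ?_
        rintro g ⟨α, hα, rfl⟩
        exact Subgroup.subset_closure ⟨α, hsub hα, rfl⟩
      rcases hmax (WeylBB n A) (weylBB_reflSub A) hHBB with hEq | hEq
      · by_cases hcard : A.card ≤ n / 2
        · refine ⟨1, one_mem _, Or.inr ⟨A, ?_, hcard, ?_⟩⟩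
          · exact Finset.card_pos.mpr ⟨i0, hi0A⟩
          · rw [map_conj_one_eq, ← hEq]
        · refine ⟨1, one_mem _, Or.inr ⟨Aᶜ, ?_, ?_, ?_⟩⟩
          · exact Finset.card_pos.mpr ⟨j0, Finset.mem_compl.mpr hj0A⟩
          · have h1 : A.card ≤ n := by
              have := Finset.card_le_univ A
              simpa using this
            have h2 : Aᶜ.card = n - A.card := by
              rw [Finset.card_compl, Fintype.card_fin]
            omega
          · rw [map_conj_one_eq, ← weylBB_compl, ← hEq]
      · exact absurd hEq (weylBB_ne_weylB hi0A hj0A)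
  · -- the D_n case
    have hpsiD : Ψ ⊆ DRootsM n := by
      rintro α ⟨hαB, hαH⟩
      rcases hαB with h | ⟨i, a, ha, rfl⟩
      · exact h
      · exact absurd (hshort_norm i a ha ⟨Or.inr ⟨i, a, ha, rfl⟩, hαH⟩)
          (fun hmem => hsh ⟨i, hmem⟩)
    have hHD : H ≤ WeylD n := by
      rw [hgen]
      refine (Subgroup.closure_le _).mpr ?_
      rintro g ⟨α, hα, rfl⟩
      exact Subgroup.subset_closure ⟨α, hpsiD hα, rfl⟩
    rcases hmax (WeylD n) weylD_reflSub hHD with hEq | hEq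
    · refine ⟨1, one_mem _, Or.inl ?_⟩
      rw [map_conj_one_eq, ← hEq]
    · exact absurd hEq (weylD_ne_weylB hn)
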